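/- arXiv:2605.16430 — 3 statements merged into one kernel-verified Lean document; each statement's English description precedes it below -/
import Mathlib

section
/- Along any iso-quality curve of the Chinchilla quality function q(n,d) = 1/(a n^{-α} + b d^{-β}), the elasticity of substitution σ = d ln(d/n) / d ln(MRTS) equals (a α d^β + b β n^α) / (a α (β+1) d^β + (α+1) b β n^α). -/
open Real

theorem chinchilla_elasticity_of_substitution
    (a b α β n d : ℝ) (ha : 0 < a) (hb : 0 < b) (hα : 0 < α) (hβ : 0 < β)
    (hn : 0 < n) (hd : 0 < d)
    (dn : ℝ) (hdn : dn ≠ 0) :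
    let dd : ℝ := -(a * α * d ^ (β + 1)) / (b * β * n ^ (α + 1)) * dn
    (dd / d - dn / n) / ((β + 1) * dd / d - (α + 1) * dn / n) =
      (a * α * d ^ β + b * β * n ^ α) /
        (a * α * (β + 1) * d ^ β + (α + 1) * b * β * n ^ α) := by
  intro dd
  have hdb : (0:ℝ) < d ^ β := rpow_pos_of_pos hd β
  have hna : (0:ℝ) < n ^ α := rpow_pos_of_pos hn α
  have hdd : dd = -(a * α * (d ^ β * d)) / (b * β * (n ^ α * n)) * dn := by
    simp only [dd, rpow_add hd, rpow_add hn, rpow_one]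
  rw [hdd]
  have hdn' : -dn ≠ 0 := neg_ne_zero.mpr hdn
  have e1 : -(a * α * (d ^ β * d)) / (b * β * (n ^ α * n)) * dn / d - dn / n =
      -dn * ((a * α * d ^ β + b * β * n ^ α) / (b * β * n ^ α * n)) := by
    field_simp; ring
  have e2 : (β + 1) * (-(a * α * (d ^ β * d)) / (b * β * (n ^ α * n)) * dn) / d -
      (α + 1) * dn / n =
      -dn * ((a * α * (β + 1) * d ^ β + (α + 1) * b * β * n ^ α) / (b * β * n ^ α * n)) := by
    field_simp; ring
  rw [e1, e2, mul_div_mul_left _ _ hdn']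
  have h1 : a * α * (β + 1) * d ^ β + (α + 1) * b * β * n ^ α ≠ 0 := by positivity
  field_simp
end

section
/- Fix ω, δ, a, ρ, α > 0 with α ≤ 1. There exists a constant K > 0 such that for all E > 2/(6δρ), any n* > 1 satisfying the log-demand first-order condition 0 = (α²ω²/(2δ))(ln n* + ln a)/n* - (αω/(δE))(ln n* + ln a + 1) + (2/E)(1/(δE) - 6ρ)n* satisfies n* ≤ K·a·E/ρ. -/
open Real

/-!
With `A = α²ω²/(2δ)`, `B = αω/(δE)` and `L = log n + log a = log (a n)`, the elementary bounds
`1 - 1/(a n) ≤ L ≤ a n - 1` give `A L / n - B (L + 1) ≤ A a + B / a` for every `n ≥ 1`.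
Since `E > 1/(3δρ)`, the cost coefficient `(2/E)(6ρ - 1/(δE))` is at least `6ρ/E`, so
`6ρ n ≤ E (A a + B / a)`, and the `1/(δE)` hidden in `B` is again below `3ρ`.
-/

lemma mul_log_div_sub_mul_log_add_one_le {A B a n : ℝ} (hA : 0 ≤ A) (hB : 0 ≤ B) (ha : 0 < a)
    (hn : 1 ≤ n) :
    A * (log n + log a) / n - B * (log n + log a + 1) ≤ A * a + B / a := by
  have hn0 : 0 < n := by linarith
  have han : 0 < a * n := by positivity
  have hL : log n + log a = log (a * n) := by
    rw [log_mul ha.ne' hn0.ne', add_comm]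
  rw [hL]
  have hA_term : A * log (a * n) / n ≤ A * a := by
    rw [div_le_iff₀ hn0, mul_assoc]
    exact mul_le_mul_of_nonneg_left (by linarith [log_le_sub_one_of_pos han]) hA
  have hB_term : -(B * (log (a * n) + 1)) ≤ B / a := by
    have hlog : -(log (a * n) + 1) ≤ (a * n)⁻¹ := by linarith [one_sub_inv_le_log_of_pos han]
    have hinv : (a * n)⁻¹ ≤ a⁻¹ := inv_anti₀ ha (le_mul_of_one_le_right ha.le hn)
    rw [div_eq_mul_inv, ← mul_neg]
    exact mul_le_mul_of_nonneg_left (hlog.trans hinv) hB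
  linarith

theorem log_demand_model_size_big_O_general
    (ω δ a ρ α : ℝ) (hω : 0 < ω) (hδ : 0 < δ) (ha : 0 < a) (hρ : 0 < ρ)
    (hα : 0 < α) :
    ∃ K : ℝ, 0 < K ∧ ∀ E n : ℝ, 2 / (6 * δ * ρ) < E → 1 < n →
      (0 =
        (α ^ 2 * ω ^ 2 / (2 * δ)) * (Real.log n + Real.log a) / n
          - (α * ω / (δ * E)) * (Real.log n + Real.log a + 1)
          + (2 / E) * (1 / (δ * E) - 6 * ρ) * n) →
      n ≤ K * a * E / ρ := by
  refine ⟨α ^ 2 * ω ^ 2 / (12 * δ) + α * ω * ρ / (2 * a ^ 2), by positivity, ?_⟩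
  intro E n hE hn hfoc
  have hE0 : 0 < E := lt_trans (by positivity) hE
  have hprice : 1 / (δ * E) < 3 * ρ := by
    rw [div_lt_iff₀ (by positivity)] at hE ⊢
    linarith
  have hsupply : 6 * ρ / E * n ≤ α ^ 2 * ω ^ 2 / (2 * δ) * a + α * ω * (1 / (δ * E)) / a :=
    calc 6 * ρ / E * n ≤ 2 / E * (6 * ρ - 1 / (δ * E)) * n := by
          gcongr ?_ * n
          rw [div_mul_eq_mul_div]
          gcongr ?_ / E
          linarith
      _ = α ^ 2 * ω ^ 2 / (2 * δ) * (log n + log a) / n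
          - α * ω / (δ * E) * (log n + log a + 1) := by linarith
      _ ≤ _ := by
          rw [mul_one_div]
          exact mul_log_div_sub_mul_log_add_one_le (by positivity) (by positivity) ha hn.le
  rw [le_div_iff₀ hρ]
  calc n * ρ = 6 * ρ / E * n * E / 6 := by field_simp
    _ ≤ (α ^ 2 * ω ^ 2 / (2 * δ) * a + α * ω * (1 / (δ * E)) / a) * E / 6 := by gcongr
    _ ≤ (α ^ 2 * ω ^ 2 / (2 * δ) * a + α * ω * (3 * ρ) / a) * E / 6 := by gcongr
    _ = _ := by field_simp; ring

theorem log_demand_model_size_big_O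
    (ω δ a ρ α : ℝ) (hω : 0 < ω) (hδ : 0 < δ) (ha : 0 < a) (hρ : 0 < ρ)
    (hα : 0 < α) (hα1 : α ≤ 1) :
    ∃ K : ℝ, 0 < K ∧ ∀ E n : ℝ, 2 / (6 * δ * ρ) < E → 1 < n →
      (0 =
        (α ^ 2 * ω ^ 2 / (2 * δ)) * (Real.log n + Real.log a) / n
          - (α * ω / (δ * E)) * (Real.log n + Real.log a + 1)
          + (2 / E) * (1 / (δ * E) - 6 * ρ) * n) →
      n ≤ K * a * E / ρ :=
  log_demand_model_size_big_O_general ω δ a ρ α hω hδ ha hρ hα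
end

section
/- Let α = 0.3. The unique real solution γ̂ of the equation 1.37^{(1-αγ̂)/(1+αγ̂)} · 3^{-γ̂/(1+αγ̂)} = 5 on the interval (-1/α, ∞) satisfies -0.8 < γ̂ < -0.7. -/
open Real

theorem break_even_gamma (α : ℝ) (hα : α = 0.3) :
    ∃ γ : ℝ, (-(1 / α) < γ ∧
        (1.37 : ℝ) ^ ((1 - α * γ) / (1 + α * γ)) * (3 : ℝ) ^ (-γ / (1 + α * γ)) = 5) ∧
      (-0.8 < γ ∧ γ < -0.7) ∧
      ∀ γ' : ℝ, (-(1 / α) < γ' ∧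
          (1.37 : ℝ) ^ ((1 - α * γ') / (1 + α * γ')) * (3 : ℝ) ^ (-γ' / (1 + α * γ')) = 5) →
        γ' = γ := by
  subst hα
  set L1 := Real.log 1.37 with hL1def
  set L3 := Real.log 3 with hL3def
  set L5 := Real.log 5 with hL5def
  have hL1 : 0 < L1 := Real.log_pos (by norm_num)
  have hL3 : 0 < L3 := Real.log_pos (by norm_num)
  have hL5 : 0 < L5 := Real.log_pos (by norm_num)
  have key1 : 38 * L5 < 62 * L1 + 40 * L3 := by
    have h1 : (38 : ℝ) * L5 = Real.log ((5 : ℝ) ^ (38 : ℕ)) := by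
      rw [Real.log_pow]; push_cast; ring
    have h2 : 62 * L1 + 40 * L3 = Real.log ((1.37 : ℝ) ^ (62 : ℕ) * (3 : ℝ) ^ (40 : ℕ)) := by
      rw [Real.log_mul (by positivity) (by positivity), Real.log_pow, Real.log_pow]
      push_cast; ring
    rw [h1, h2]
    apply Real.log_lt_log (by positivity)
    norm_num
  have key2 : 121 * L1 + 70 * L3 < 79 * L5 := by
    have h1 : (79 : ℝ) * L5 = Real.log ((5 : ℝ) ^ (79 : ℕ)) := by
      rw [Real.log_pow]; push_cast; ring
    have h2 : 121 * L1 + 70 * L3 = Real.log ((1.37 : ℝ) ^ (121 : ℕ) * (3 : ℝ) ^ (70 : ℕ)) := by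
      rw [Real.log_mul (by positivity) (by positivity), Real.log_pow, Real.log_pow]
      push_cast; ring
    rw [h1, h2]
    apply Real.log_lt_log (by positivity)
    norm_num
  set D : ℝ := 3 * L5 + 3 * L1 + 10 * L3 with hDdef
  have hD : 0 < D := by simp only [hDdef]; linarith
  have hDne : D ≠ 0 := ne_of_gt hD
  set γ : ℝ := 10 * (L1 - L5) / D with hγdef
  have hE : 0 < 6 * L1 + 10 * L3 := by linarith
  have hden : 1 + 0.3 * γ = (6 * L1 + 10 * L3) / D := by
    rw [hγdef]; field_simp; ring
  have hdpos : 0 < 1 + 0.3 * γ := by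
    rw [hden]; exact div_pos hE hD
  have hdne : (1 + 0.3 * γ) ≠ 0 := ne_of_gt hdpos
  refine ⟨γ, ⟨?_, ?_⟩, ⟨?_, ?_⟩, ?_⟩
  · -- -(1/0.3) < γ
    nlinarith [hdpos]
  · -- the equation
    have hEne : (6 * L1 + 10 * L3) ≠ 0 := ne_of_gt hE
    have hexp1 : (1 - 0.3 * γ) / (1 + 0.3 * γ) * L1 + (-γ / (1 + 0.3 * γ)) * L3 = L5 := by
      rw [hden, hγdef]
      field_simp
      ring
    have hlog : Real.log ((1.37 : ℝ) ^ ((1 - 0.3 * γ) / (1 + 0.3 * γ)) *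
        (3 : ℝ) ^ (-γ / (1 + 0.3 * γ))) = L5 := by
      rw [Real.log_mul (ne_of_gt (Real.rpow_pos_of_pos (by norm_num) _))
          (ne_of_gt (Real.rpow_pos_of_pos (by norm_num) _)),
        Real.log_rpow (by norm_num), Real.log_rpow (by norm_num), ← hL1def, ← hL3def]
      exact hexp1
    have hpos : (0 : ℝ) < (1.37 : ℝ) ^ ((1 - 0.3 * γ) / (1 + 0.3 * γ)) *
        (3 : ℝ) ^ (-γ / (1 + 0.3 * γ)) := by positivity
    calc (1.37 : ℝ) ^ ((1 - 0.3 * γ) / (1 + 0.3 * γ)) * (3 : ℝ) ^ (-γ / (1 + 0.3 * γ))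
        = Real.exp (Real.log ((1.37 : ℝ) ^ ((1 - 0.3 * γ) / (1 + 0.3 * γ)) *
            (3 : ℝ) ^ (-γ / (1 + 0.3 * γ)))) := (Real.exp_log hpos).symm
      _ = Real.exp L5 := by rw [hlog]
      _ = 5 := Real.exp_log (by norm_num)
  · -- -0.8 < γ
    rw [hγdef, lt_div_iff₀ hD]
    linarith
  · -- γ < -0.7
    rw [hγdef, div_lt_iff₀ hD]
    linarith
  · -- uniqueness
    rintro γ' ⟨hlb, heq⟩
    have hdpos' : 0 < 1 + 0.3 * γ' := by nlinarith [hlb]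
    have hdne' : (1 + 0.3 * γ') ≠ 0 := ne_of_gt hdpos'
    have hlog' : (1 - 0.3 * γ') / (1 + 0.3 * γ') * L1 + (-γ' / (1 + 0.3 * γ')) * L3 = L5 := by
      have := congrArg Real.log heq
      rwa [Real.log_mul (ne_of_gt (Real.rpow_pos_of_pos (by norm_num) _))
          (ne_of_gt (Real.rpow_pos_of_pos (by norm_num) _)),
        Real.log_rpow (by norm_num), Real.log_rpow (by norm_num), ← hL1def, ← hL3def] at this
    have hlin : (1 - 0.3 * γ') * L1 + (-γ') * L3 = (1 + 0.3 * γ') * L5 := by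
      field_simp at hlog'
      linarith [hlog']
    rw [hγdef, eq_div_iff hDne]
    nlinarith [hlin]
end
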